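/- For all formulas α, β ∈ Fm, the following are equivalent: (i) every algebra A with unary operation ¬ satisfying ¬¬a = a for all a ∈ A satisfies the equation α ≈ β (i.e., h(α) = h(β) for every homomorphism h : Fm → A); (ii) α ⊣⊢_N β (α ⊢_N β and β ⊢_N α); (iii) there exist x ∈ Var and n, k ∈ ℕ₀ with α = ¬ⁿx, β = ¬ᵏx and n ≡ k (mod 2). Consequently, the intrinsic variety of S_N is the class of all algebras satisfying x ≈ ¬¬x. -/

import Mathlib

/-- Formulas of the algebraic language with a single unary connective ¬,
built as the absolutely free algebra over a countably infinite set of variables. -/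
inductive Fm : Type where
  | var : ℕ → Fm
  | neg : Fm → Fm

/-- `negn n α` is ¬ⁿα: ¬⁰α = α and ¬ⁿα = ¬(¬ⁿ⁻¹α). -/
def negn : ℕ → Fm → Fm
  | 0, α => α
  | n + 1, α => Fm.neg (negn n α)

/-- The {¬}-fragment ⊢_N of classical propositional logic: Γ ⊢_N α iff every
homomorphism h from Fm to the two-element algebra 2_¬ = ⟨{0,1},¬⟩ (¬0 = 1, ¬1 = 0)
with h[Γ] ⊆ {1} satisfies h(α) = 1. -/
def DerivN (Γ : Set Fm) (α : Fm) : Prop :=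
  ∀ h : Fm → Bool, (∀ φ : Fm, h (Fm.neg φ) = !(h φ)) →
    (∀ γ ∈ Γ, h γ = true) → h α = true

/-! Every formula is ¬ⁿx for a variable x and some n. In an involutive algebra ¬ⁿ acts as
¬^(n mod 2), so ¬ⁿx ≈ ¬ᵏx holds there as soon as n ≡ k (mod 2); the two-element algebra is
involutive, hence the equation implies interderivability. Conversely, interderivable formulas
take the same value under every Boolean valuation: valuations separating the variables force
x = y, and ¬ⁿ1 = ¬ᵏ1 in 2_¬ forces n ≡ k (mod 2). -/

namespace Function.Involutive

variable {α : Type*} {f : α → α}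

lemma iterate_mod_two (hf : Involutive f) (n : ℕ) : f^[n] = f^[n % 2] := by
  conv_lhs => rw [← Nat.mod_add_div n 2]
  rw [iterate_add, hf.iterate_two_mul, comp_id]

end Function.Involutive

lemma Bool.not_iterate_eq_iff {n k : ℕ} (b : Bool) : (!·)^[n] b = (!·)^[k] b ↔ n % 2 = k % 2 := by
  rw [Bool.involutive_not.iterate_mod_two n, Bool.involutive_not.iterate_mod_two k]
  rcases Nat.mod_two_eq_zero_or_one n with hn | hn <;>
    rcases Nat.mod_two_eq_zero_or_one k with hk | hk <;> cases b <;> simp [hn, hk]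

namespace Fm

lemma exists_eq_negn_var : ∀ φ : Fm, ∃ x n, φ = negn n (var x)
  | var x => ⟨x, 0, rfl⟩
  | neg φ => by
    obtain ⟨x, n, rfl⟩ := exists_eq_negn_var φ
    exact ⟨x, n + 1, rfl⟩

def eval {A : Type*} (neg : A → A) (v : ℕ → A) : Fm → A
  | var x => v x
  | Fm.neg φ => neg (eval neg v φ)

end Fm

lemma map_negn {A : Type*} {neg : A → A} {h : Fm → A} (hh : ∀ φ, h (Fm.neg φ) = neg (h φ))
    (n : ℕ) (φ : Fm) : h (negn n φ) = neg^[n] (h φ) := by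
  induction n with
  | zero => rfl
  | succ n ih => rw [negn, hh, ih, Function.iterate_succ_apply']

lemma map_negn_eq_of_mod_two_eq {A : Type*} {neg : A → A} (hneg : Function.Involutive neg)
    {h : Fm → A} (hh : ∀ φ, h (Fm.neg φ) = neg (h φ)) {n k : ℕ} (hnk : n % 2 = k % 2) (φ : Fm) :
    h (negn n φ) = h (negn k φ) := by
  rw [map_negn hh, map_negn hh, hneg.iterate_mod_two n, hneg.iterate_mod_two k, hnk]

lemma derivN_singleton_and_derivN_singleton_iff {α β : Fm} :
    DerivN {α} β ∧ DerivN {β} α ↔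
      ∀ h : Fm → Bool, (∀ φ, h (Fm.neg φ) = !(h φ)) → h α = h β := by
  constructor
  · rintro ⟨hαβ, hβα⟩ h hh
    rw [Bool.eq_iff_iff]
    exact ⟨fun hα => hαβ h hh (by rintro _ rfl; exact hα),
      fun hβ => hβα h hh (by rintro _ rfl; exact hβ)⟩
  · intro H
    exact ⟨fun h hh hα => H h hh ▸ hα α rfl, fun h hh hβ => (H h hh).symm ▸ hβ β rfl⟩

lemma exists_negn_var_of_forall_bool_hom_eq {α β : Fm}
    (H : ∀ h : Fm → Bool, (∀ φ, h (Fm.neg φ) = !(h φ)) → h α = h β) :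
    ∃ x n k : ℕ, α = negn n (Fm.var x) ∧ β = negn k (Fm.var x) ∧ n % 2 = k % 2 := by
  obtain ⟨x, n, rfl⟩ := Fm.exists_eq_negn_var α
  obtain ⟨y, k, rfl⟩ := Fm.exists_eq_negn_var β
  have hv : ∀ v : ℕ → Bool, (!·)^[n] (v x) = (!·)^[k] (v y) := fun v => by
    simpa only [map_negn (h := Fm.eval (!·) v) (fun _ => rfl), Fm.eval]
      using H (Fm.eval (!·) v) fun _ => rfl
  have hxy : x = y := by
    by_contra hne
    have hsep := hv (Function.update (fun _ => true) y false)
    rw [Function.update_of_ne hne, Function.update_self, hv fun _ => true] at hsep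
    exact Bool.true_eq_false.mp (Bool.involutive_not.injective.iterate k hsep)
  subst hxy
  exact ⟨x, n, k, rfl, rfl, (Bool.not_iterate_eq_iff true).mp (hv fun _ => true)⟩

/-- The following are equivalent: (i) every algebra satisfying ¬¬a = a satisfies
α ≈ β; (ii) α ⊣⊢_N β; (iii) α = ¬ⁿx, β = ¬ᵏx with n ≡ k (mod 2).
Consequently the intrinsic variety of S_N is the class of algebras satisfying
x ≈ ¬¬x. -/
theorem stmt9 (α β : Fm) :
    ((∀ (A : Type) (neg : A → A), (∀ a : A, neg (neg a) = a) →
        ∀ h : Fm → A, (∀ φ : Fm, h (Fm.neg φ) = neg (h φ)) → h α = h β) ↔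
      (DerivN {α} β ∧ DerivN {β} α)) ∧
    ((DerivN {α} β ∧ DerivN {β} α) ↔
      ∃ (x n k : ℕ), α = negn n (Fm.var x) ∧ β = negn k (Fm.var x) ∧ n % 2 = k % 2) := by
  have h12 : (∀ (A : Type) (neg : A → A), (∀ a : A, neg (neg a) = a) →
      ∀ h : Fm → A, (∀ φ : Fm, h (Fm.neg φ) = neg (h φ)) → h α = h β) →
      DerivN {α} β ∧ DerivN {β} α := fun H =>
    derivN_singleton_and_derivN_singleton_iff.mpr fun h hh => H Bool (!·) Bool.not_not h hh
  have h23 : DerivN {α} β ∧ DerivN {β} α →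
      ∃ (x n k : ℕ), α = negn n (Fm.var x) ∧ β = negn k (Fm.var x) ∧ n % 2 = k % 2 := fun H =>
    exists_negn_var_of_forall_bool_hom_eq (derivN_singleton_and_derivN_singleton_iff.mp H)
  have h31 : (∃ (x n k : ℕ), α = negn n (Fm.var x) ∧ β = negn k (Fm.var x) ∧ n % 2 = k % 2) →
      ∀ (A : Type) (neg : A → A), (∀ a : A, neg (neg a) = a) →
        ∀ h : Fm → A, (∀ φ : Fm, h (Fm.neg φ) = neg (h φ)) → h α = h β := by
    rintro ⟨x, n, k, rfl, rfl, hnk⟩ A neg hneg h hh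
    exact map_negn_eq_of_mod_two_eq hneg hh hnk _
  exact ⟨⟨h12, h31 ∘ h23⟩, ⟨h23, h12 ∘ h31⟩⟩
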